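/- Let f : ℤ_p → ℤ_p be a measure-preserving 1-Lipschitz function with van der Put coefficients B_m = p^{n−1}(b_{m0} + b_{m1}p + ⋯) for p^{n−1} ≤ m ≤ p^n − 1, n ≥ 2. Then Σ_{m=p^{n−1}}^{p^n−1} B_m ≡ (1/2)(p−1)p^{2n−1} + T_n p^n (mod p^{n+1}), where T_n = Σ_{m=p^{n−1}}^{p^n−1} b_{m1}. -/

import Mathlib

open MeasureTheory Finset

namespace VDP

noncomputable instance (p : ℕ) [Fact p.Prime] : MeasurableSpace ℤ_[p] := borel _
instance (p : ℕ) [Fact p.Prime] : BorelSpace ℤ_[p] := ⟨rfl⟩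

/-- The Haar probability measure on `ℤ_[p]`. -/
noncomputable def haarZp (p : ℕ) [Fact p.Prime] : Measure ℤ_[p] :=
  Measure.addHaarMeasure ⊤

/-- `f` is 1-Lipschitz. -/
def IsLip (p : ℕ) [Fact p.Prime] (f : ℤ_[p] → ℤ_[p]) : Prop :=
  ∀ x y : ℤ_[p], ‖f x - f y‖ ≤ ‖x - y‖

/-- The van der Put basis function `χ(m, x)` on `ℤ_[p]` (with `⌊log_p 0⌋ = 0`). -/
noncomputable def chi (p : ℕ) [Fact p.Prime] (m : ℕ) (x : ℤ_[p]) : ℤ_[p] :=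
  if ‖x - (m : ℤ_[p])‖ ≤ ((p : ℝ) ^ (Nat.log p m + 1))⁻¹ then 1 else 0

/-- `q(m) = m_s p^s`, the leading term of the `p`-adic expansion of `m`. -/
def q (p m : ℕ) : ℕ := m / p ^ Nat.log p m * p ^ Nat.log p m

/-- `f` has van der Put expansion with coefficients `B`. -/
def vdpExpansion (p : ℕ) [Fact p.Prime] (f : ℤ_[p] → ℤ_[p]) (B : ℕ → ℤ_[p]) : Prop :=
  ∀ x, f x = ∑' m, B m * chi p m x

/-- `f` is bijective modulo `p^n`. -/
def BijModPow (p : ℕ) [Fact p.Prime] (f : ℤ_[p] → ℤ_[p]) (n : ℕ) : Prop :=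
  Function.Bijective fun a : ZMod (p ^ n) => PadicInt.toZModPow n (f ((a.val : ℕ) : ℤ_[p]))

/-- `f` is transitive modulo `p^n`. -/
def TransModPow (p : ℕ) [Fact p.Prime] (f : ℤ_[p] → ℤ_[p]) (n : ℕ) : Prop :=
  ∀ x : ℤ_[p], ∀ a : ZMod (p ^ n), ∃ k : ℕ, PadicInt.toZModPow n (f^[k] x) = a

/-- The `i`-th digit of the canonical `p`-adic expansion of `x`. -/
noncomputable def digit (p : ℕ) [Fact p.Prime] (x : ℤ_[p]) (i : ℕ) : ℕ :=
  x.appr (i + 1) / p ^ i % p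

end VDP

/-!
Write `s = p ^ (n - 1)`. A measure-preserving 1-Lipschitz map of `ℤ_[p]` is an isometry, hence
injective modulo `p ^ n`. For `m = c * s + r` with `1 ≤ c < p` and `r < s`, the van der Put
coefficient is `B m = f m - f r = s * b m`, so the leading digits `b_{m0}`, `1 ≤ c < p`, are
distinct and nonzero: a permutation of `1, …, p - 1`. Modulo `p ^ (n + 1)` we have
`B m ≡ s * b_{m0} + p * s * b_{m1}`, and summing the first terms over all `r < s` gives
`s * (p (p - 1) / 2) * s = (p - 1) p ^ (2n - 1) / 2`.
-/

open Metric

section Ultrametric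

variable {G : Type*} [NormedAddCommGroup G] [IsUltrametricDist G] [CompactSpace G]
  [MeasurableSpace G] [BorelSpace G] {μ : Measure G} [μ.IsAddHaarMeasure]

/-- Two disjoint balls of radius `r` would be mapped into a single one, which has the same
(positive, finite) Haar measure as each of them. -/
theorem norm_map_sub_eq_of_measurePreserving {f : G → G} (hf : ∀ x y, ‖f x - f y‖ ≤ ‖x - y‖)
    (hμ : MeasurePreserving f μ μ) (x y : G) : ‖f x - f y‖ = ‖x - y‖ := by
  refine (hf x y).antisymm (not_lt.1 fun hlt => ?_)
  obtain ⟨r, hfr, hr⟩ := exists_between hlt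
  have hr0 : 0 < r := (norm_nonneg _).trans_lt hfr
  have hxy : r < dist y x := by rwa [dist_eq_norm']
  have hfxy : dist (f y) (f x) ≤ r := by rw [dist_eq_norm']; exact hfr.le
  have hdisj : Disjoint (closedBall x r) (closedBall y r) := by
    refine (IsUltrametricDist.closedBall_eq_or_disjoint x y r).resolve_left fun h => ?_
    have hy : y ∈ closedBall x r := h ▸ mem_closedBall_self hr0.le
    exact hxy.not_ge hy
  have hmaps : closedBall x r ∪ closedBall y r ⊆ f ⁻¹' closedBall (f x) r := by
    have hlip : ∀ u v, dist (f u) (f v) ≤ dist u v := by simpa only [dist_eq_norm] using hf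
    rintro z (hz | hz)
    · exact (hlip z x).trans hz
    · exact (IsUltrametricDist.dist_triangle_max _ (f y) _).trans
        (max_le ((hlip z y).trans hz) hfxy)
  set c := μ (closedBall 0 r)
  have hc : c + c ≤ c + 0 := calc
    c + c = μ (closedBall x r ∪ closedBall y r) := by
      rw [measure_union hdisj measurableSet_closedBall, Measure.addHaar_closedBall_center μ x,
        Measure.addHaar_closedBall_center μ y]
    _ ≤ μ (f ⁻¹' closedBall (f x) r) := measure_mono hmaps
    _ = c + 0 := by
      rw [hμ.measure_preimage measurableSet_closedBall.nullMeasurableSet,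
        Measure.addHaar_closedBall_center, add_zero]
  have hpos : 0 < c :=
    (IsUltrametricDist.isOpen_closedBall 0 hr0.ne').measure_pos μ ⟨0, mem_closedBall_self hr0.le⟩
  exact hpos.not_ge ((ENNReal.add_le_add_iff_left (measure_ne_top μ _)).1 hc)

end Ultrametric

theorem sum_Ico_mul_eq_sum_sum {M : Type*} [AddCancelCommMonoid M] (g : ℕ → M) {a : ℕ}
    (ha : 1 ≤ a) (s : ℕ) :
    ∑ m ∈ Ico s (a * s), g m = ∑ c ∈ Ico 1 a, ∑ r ∈ range s, g (c * s + r) := by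
  have hrange : ∀ a, ∑ m ∈ range (a * s), g m = ∑ c ∈ range a, ∑ r ∈ range s, g (c * s + r) := by
    intro a
    induction a with
    | zero => simp
    | succ a ih => rw [add_mul, one_mul, sum_range_add, ih, sum_range_succ]
  have h := hrange a
  rw [← sum_range_add_sum_Ico _ (Nat.le_mul_of_pos_left s ha),
    ← sum_range_add_sum_Ico _ ha, sum_range_one] at h
  simpa using h

theorem sum_Ico_one_id_mul_two (n : ℕ) : (∑ c ∈ Ico 1 n, c) * 2 = n * (n - 1) := by
  rw [← sum_range_id_mul_two]
  rcases n.eq_zero_or_pos with rfl | hn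
  · rfl
  · rw [sum_range_eq_add_Ico _ hn, zero_add]

theorem sub_one_mul_pow_div_two (p k : ℕ) :
    (p - 1) * p ^ (2 * k + 1) / 2 = p ^ k * (∑ c ∈ Ico 1 p, c) * p ^ k := by
  rw [Nat.div_eq_of_eq_mul_left two_pos]
  calc (p - 1) * p ^ (2 * k + 1) = p ^ k * (p * (p - 1)) * p ^ k := by ring
    _ = p ^ k * (∑ c ∈ Ico 1 p, c) * p ^ k * 2 := by rw [← sum_Ico_one_id_mul_two]; ring

namespace VDP

variable {p : ℕ} [Fact p.Prime]

instance : (haarZp p).IsAddHaarMeasure := by unfold haarZp; infer_instance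

theorem pow_dvd_map_sub_iff {f : ℤ_[p] → ℤ_[p]} (hf : ∀ x y, ‖f x - f y‖ = ‖x - y‖)
    (n : ℕ) (x y : ℤ_[p]) : (p : ℤ_[p]) ^ n ∣ f x - f y ↔ (p : ℤ_[p]) ^ n ∣ x - y := by
  simp only [← Ideal.mem_span_singleton, ← PadicInt.norm_le_pow_iff_mem_span_pow, hf]

theorem modEq_iff_pow_dvd_natCast_sub (n a b : ℕ) :
    a ≡ b [MOD p ^ n] ↔ (p : ℤ_[p]) ^ n ∣ (a : ℤ_[p]) - b := by
  have hcast : (a : ℤ_[p]) - b = ((a - b : ℤ) : ℤ_[p]) := by push_cast; ring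
  rw [Nat.ModEq.comm, ← Int.natCast_modEq_iff, Int.modEq_iff_dvd, hcast,
    PadicInt.pow_p_dvd_int_iff]
  push_cast
  rfl

theorem chi_natCast (k x : ℕ) :
    chi p k x = if x ≡ k [MOD p ^ (Nat.log p k + 1)] then 1 else 0 := by
  refine if_congr ?_ rfl rfl
  rw [modEq_iff_pow_dvd_natCast_sub, ← Ideal.mem_span_singleton,
    ← PadicInt.norm_le_pow_iff_mem_span_pow, zpow_neg, zpow_natCast]

theorem chi_natCast_self (m : ℕ) : chi p m m = 1 := by
  rw [chi_natCast, if_pos (Nat.ModEq.refl m)]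

theorem chi_natCast_of_lt {k x : ℕ} (h : x < k) : chi p k x = 0 := by
  have hk := Nat.lt_pow_succ_log_self (Fact.out : p.Prime).one_lt k
  rw [chi_natCast, if_neg fun hx => h.ne (hx.eq_of_lt_of_lt (h.trans hk) hk)]

theorem chi_natCast_mod_pow_log {k m : ℕ} (hm : p ≤ m) (hk : k < p ^ Nat.log p m) :
    chi p k (m % p ^ Nat.log p m : ℕ) = chi p k m := by
  have hlog : Nat.log p k + 1 ≤ Nat.log p m :=
    Nat.log_lt_of_lt_pow' (Nat.log_pos (Fact.out : p.Prime).one_lt hm).ne' hk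
  have hmod : m % p ^ Nat.log p m ≡ m [MOD p ^ (Nat.log p k + 1)] :=
    (Nat.mod_modEq m _).of_dvd (pow_dvd_pow p hlog)
  simp only [chi_natCast]
  exact if_congr ⟨hmod.symm.trans, hmod.trans⟩ rfl rfl

theorem chi_natCast_eq_zero_of_log_eq {k m : ℕ} (hlog : Nat.log p k = Nat.log p m)
    (hkm : k ≠ m) : chi p k m = 0 := by
  have hp := (Fact.out : p.Prime).one_lt
  have hm := Nat.lt_pow_succ_log_self hp m
  rw [← hlog] at hm
  rw [chi_natCast, if_neg fun h => hkm (h.eq_of_lt_of_lt hm (Nat.lt_pow_succ_log_self hp k)).symm]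

theorem vdpCoeff_eq_sub {f : ℤ_[p] → ℤ_[p]} {B : ℕ → ℤ_[p]} (hB : vdpExpansion p f B) {m : ℕ}
    (hm : p ≤ m) : B m = f m - f (m % p ^ Nat.log p m : ℕ) := by
  have hp := (Fact.out : p.Prime).one_lt
  set s := Nat.log p m
  have hsm : p ^ s ≤ m := Nat.pow_log_le_self p (by omega)
  have hr : m % p ^ s < p ^ s := Nat.mod_lt m (by positivity)
  have hsum : ∀ x ≤ m, f x = ∑ k ∈ range (m + 1), B k * chi p k x := fun x hx =>
    (hB x).trans (tsum_eq_sum fun k hk => by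
      rw [chi_natCast_of_lt (by rw [mem_range] at hk; omega), mul_zero])
  rw [hsum m le_rfl, hsum _ (Nat.mod_le m _), ← sum_sub_distrib,
    sum_eq_single_of_mem m (self_mem_range_succ m)]
  · rw [chi_natCast_self, chi_natCast_of_lt (hr.trans_le hsm), mul_one, mul_zero, sub_zero]
  · intro k hk hkm
    rw [← mul_sub]
    rcases lt_or_ge k (p ^ s) with hks | hks
    · rw [chi_natCast_mod_pow_log hm hks, sub_self, mul_zero]
    · have hlog : Nat.log p k = s := le_antisymm
        (Nat.log_mono_right (by rw [mem_range] at hk; omega)) (Nat.le_log_of_pow_le hp hks)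
      rw [chi_natCast_eq_zero_of_log_eq hlog hkm, chi_natCast_of_lt (hr.trans_le hks), sub_zero,
        mul_zero]

theorem digit_lt (x : ℤ_[p]) (i : ℕ) : digit p x i < p :=
  Nat.mod_lt _ (Fact.out : p.Prime).pos

theorem digit_zero_add_mul_digit_one (x : ℤ_[p]) : digit p x 0 + p * digit p x 1 = x.appr 2 := by
  have h1 : x.appr 1 < p := by simpa using x.appr_lt 1
  have h2 : x.appr 2 / p < p := Nat.div_lt_of_lt_mul (by rw [← sq]; exact x.appr_lt 2)
  have hmod : x.appr 2 % p = x.appr 1 := by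
    have := (Nat.modEq_iff_dvd' (x.appr_mono one_le_two)).2
      (by simpa using x.dvd_appr_sub_appr 1 2 (by omega))
    rw [← this, Nat.mod_eq_of_lt h1]
  simp only [digit, pow_zero, Nat.div_one, pow_one, Nat.mod_eq_of_lt h1, Nat.mod_eq_of_lt h2]
  rw [← hmod, Nat.mod_add_div]

theorem sq_dvd_sub_digits (x : ℤ_[p]) :
    (p : ℤ_[p]) ^ 2 ∣ x - (digit p x 0 + p * digit p x 1) := by
  have h := x.appr_spec 2
  rw [Ideal.mem_span_singleton, ← digit_zero_add_mul_digit_one] at h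
  exact_mod_cast h

theorem dvd_sub_digit_zero (x : ℤ_[p]) : (p : ℤ_[p]) ∣ x - digit p x 0 := by
  have h := (dvd_pow_self (p : ℤ_[p]) two_ne_zero).trans (sq_dvd_sub_digits x)
  rwa [← sub_sub, dvd_sub_left (dvd_mul_right _ _)] at h

theorem pow_add_two_dvd_pow_mul_sub_digits (k : ℕ) (x : ℤ_[p]) :
    (p : ℤ_[p]) ^ (k + 2) ∣
      p ^ k * x - (digit p x 0 * p ^ k + digit p x 1 * p ^ (k + 1)) := by
  obtain ⟨c, hc⟩ := sq_dvd_sub_digits x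
  exact ⟨c, by linear_combination (p : ℤ_[p]) ^ k * hc⟩

section Counting

variable {f : ℤ_[p] → ℤ_[p]} {B b : ℕ → ℤ_[p]} {k : ℕ}

/-- The leading digits form a permutation of `1, …, p - 1`: they are nonzero, and distinct
because `f` is injective modulo `p ^ (k + 1)` while `B (c * p ^ k + r) = f (c * p ^ k + r) - f r`.
-/
theorem sum_digit_zero_eq_sum_Ico (hf : ∀ x y, ‖f x - f y‖ = ‖x - y‖) (hB : vdpExpansion p f B)
    (hk : 1 ≤ k) (hb : ∀ m ∈ Ico (p ^ k) (p ^ (k + 1)), B m = p ^ k * b m ∧ digit p (b m) 0 ≠ 0)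
    {r : ℕ} (hr : r < p ^ k) :
    ∑ c ∈ Ico 1 p, digit p (b (c * p ^ k + r)) 0 = ∑ c ∈ Ico 1 p, c := by
  have hmem : ∀ c ∈ Ico 1 p, c * p ^ k + r ∈ Ico (p ^ k) (p ^ (k + 1)) := by
    intro c hc
    rw [mem_Ico] at hc ⊢
    constructor
    · nlinarith
    · rw [pow_succ']; nlinarith
  have hB' : ∀ c ∈ Ico 1 p, B (c * p ^ k + r) = f (c * p ^ k + r : ℕ) - f r := by
    intro c hc
    obtain ⟨hlo, hhi⟩ := mem_Ico.1 (hmem c hc)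
    have hp : p ≤ c * p ^ k + r := (Nat.le_self_pow (by omega) p).trans hlo
    rw [vdpCoeff_eq_sub hB hp, Nat.log_eq_of_pow_le_of_lt_pow hlo hhi, Nat.mul_add_mod_of_lt hr]
  set F := fun c => digit p (b (c * p ^ k + r)) 0
  have hmaps : Set.MapsTo F (Ico 1 p) (Ico 1 p) := fun c hc =>
    mem_Ico.2 ⟨Nat.one_le_iff_ne_zero.2 (hb _ (hmem c hc)).2, digit_lt _ _⟩
  have hinj : Set.InjOn F (Ico 1 p) := by
    intro c₁ hc₁ c₂ hc₂ h
    have hdig : (p : ℤ_[p]) ∣ b (c₁ * p ^ k + r) - b (c₂ * p ^ k + r) := by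
      have := dvd_sub (dvd_sub_digit_zero (b (c₁ * p ^ k + r)))
        (dvd_sub_digit_zero (b (c₂ * p ^ k + r)))
      rwa [show digit p (b (c₁ * p ^ k + r)) 0 = digit p (b (c₂ * p ^ k + r)) 0 from h,
        sub_sub_sub_cancel_right] at this
    have hdvd : (p : ℤ_[p]) ^ (k + 1) ∣ f (c₁ * p ^ k + r : ℕ) - f (c₂ * p ^ k + r : ℕ) := by
      rw [← sub_sub_sub_cancel_right _ _ (f r), ← hB' c₁ hc₁, ← hB' c₂ hc₂,
        (hb _ (hmem c₁ hc₁)).1, (hb _ (hmem c₂ hc₂)).1, ← mul_sub, pow_succ]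
      exact mul_dvd_mul_left _ hdig
    rw [pow_dvd_map_sub_iff hf, ← modEq_iff_pow_dvd_natCast_sub] at hdvd
    have := hdvd.eq_of_lt_of_lt (mem_Ico.1 (hmem c₁ hc₁)).2 (mem_Ico.1 (hmem c₂ hc₂)).2
    exact Nat.eq_of_mul_eq_mul_right (pow_pos (Fact.out : p.Prime).pos k)
      (Nat.add_right_cancel this)
  exact sum_nbij F (fun c hc => hmaps hc) hinj
    (surjOn_of_injOn_of_card_le F hmaps hinj le_rfl) fun _ _ => rfl

theorem sum_digit_zero_Ico_pow (hf : ∀ x y, ‖f x - f y‖ = ‖x - y‖) (hB : vdpExpansion p f B)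
    (hk : 1 ≤ k) (hb : ∀ m ∈ Ico (p ^ k) (p ^ (k + 1)), B m = p ^ k * b m ∧ digit p (b m) 0 ≠ 0) :
    ∑ m ∈ Ico (p ^ k) (p ^ (k + 1)), digit p (b m) 0 = p ^ k * ∑ c ∈ Ico 1 p, c := by
  rw [pow_succ', sum_Ico_mul_eq_sum_sum _ (Fact.out : p.Prime).one_lt.le, sum_comm,
    sum_congr rfl fun r hr => sum_digit_zero_eq_sum_Ico hf hB hk hb (mem_range.1 hr), sum_const,
    card_range, smul_eq_mul]

end Counting

end VDP

open VDP MeasureTheory Finset in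
theorem stmt8 (p : ℕ) [Fact p.Prime] (f : ℤ_[p] → ℤ_[p]) (B : ℕ → ℤ_[p]) (b : ℕ → ℤ_[p])
    (hf : IsLip p f) (hB : vdpExpansion p f B)
    (hmp : MeasurePreserving f (haarZp p) (haarZp p))
    (n : ℕ) (hn : 2 ≤ n)
    (hb : ∀ m : ℕ, p ^ (n - 1) ≤ m → m ≤ p ^ n - 1 →
      B m = (p : ℤ_[p]) ^ (n - 1) * b m ∧ digit p (b m) 0 ≠ 0) :
    (p : ℤ_[p]) ^ (n + 1) ∣
      (∑ m ∈ Finset.Ico (p ^ (n - 1)) (p ^ n), B m) -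
        ((((p - 1) * p ^ (2 * n - 1) / 2 : ℕ) : ℤ_[p]) +
          ((∑ m ∈ Finset.Ico (p ^ (n - 1)) (p ^ n), digit p (b m) 1 : ℕ) : ℤ_[p]) *
            (p : ℤ_[p]) ^ n) := by
  obtain ⟨k, rfl⟩ : ∃ k, n = k + 1 := ⟨n - 1, by omega⟩
  have hk : 1 ≤ k := by omega
  simp only [Nat.add_sub_cancel, show 2 * (k + 1) - 1 = 2 * k + 1 by omega] at hb ⊢
  have hb' : ∀ m ∈ Ico (p ^ k) (p ^ (k + 1)), B m = p ^ k * b m ∧ digit p (b m) 0 ≠ 0 :=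
    fun m hm => hb m (mem_Ico.1 hm).1 (Nat.le_sub_one_of_lt (mem_Ico.1 hm).2)
  have hterm : ∀ m ∈ Ico (p ^ k) (p ^ (k + 1)), (p : ℤ_[p]) ^ (k + 2) ∣
      B m - (digit p (b m) 0 * p ^ k + digit p (b m) 1 * p ^ (k + 1)) := fun m hm => by
    rw [(hb' m hm).1]
    exact pow_add_two_dvd_pow_mul_sub_digits k (b m)
  rw [sub_one_mul_pow_div_two, ← sum_digit_zero_Ico_pow
    (norm_map_sub_eq_of_measurePreserving hf hmp) hB hk hb']
  convert dvd_sum hterm using 1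
  push_cast
  rw [sum_sub_distrib, sum_add_distrib, sum_mul, sum_mul]
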